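/- arXiv:2309.06437 — 2 statements merged into one kernel-verified Lean document; each statement's English description precedes it below -/
import Mathlib

section
/- Let d ≥ 1 and let A be a nonempty finite subset of ℤ^d. Then |∂A| ≥ 2d·|A|^{1−1/d}. Moreover, for every v ∈ ℤ^d and every positive integer N, letting B = v + {0,1,…,N−1}^d, it holds that |∂A ∩ (B×B)| ≥ (2/(3N))·min{|A∩B|, |B∖A|}. -/
namespace DF

/-- The base lattice `ℤ^d`. -/
abbrev Base (d : ℕ) := Fin d → ℤ

/-- ℓ¹ distance on the base lattice. -/
def dist1 {d : ℕ} (u v : Base d) : ℤ := ∑ i, |u i - v i|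

/-- Nearest-neighbour adjacency on the base lattice. -/
def baseAdj {d : ℕ} (u v : Base d) : Prop := dist1 u v = 1

/-- Edges of the base lattice `ℤ^d`: unordered pairs at ℓ¹-distance 1. -/
def IsBaseEdge {d : ℕ} (e : Sym2 (Base d)) : Prop :=
  ∃ u v : Base d, baseAdj u v ∧ e = s(u, v)

/-- `|τ u − τ v|` over an unordered pair. -/
def pairAbsDiff {d : ℕ} (τ : Base d → ℤ) : Sym2 (Base d) → ℤ :=
  Sym2.lift ⟨fun u v => |τ u - τ v|, fun _ _ => abs_sub_comm _ _⟩

/-- A shift: a finitely supported `τ : ℤ^d → ℤ`. -/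
def IsShift {d : ℕ} (τ : Base d → ℤ) : Prop := {v | τ v ≠ 0}.Finite

/-- Total variation of a shift: the sum of `|τ u − τ v|` over all edges. -/
noncomputable def TV {d : ℕ} (τ : Base d → ℤ) : ℤ :=
  ∑ᶠ e ∈ {e : Sym2 (Base d) | IsBaseEdge e}, pairAbsDiff τ e

/-- Total variation of `τ` restricted to edges with both endpoints in `A`. -/
noncomputable def TVon {d : ℕ} (τ : Base d → ℤ) (A : Set (Base d)) : ℤ :=
  ∑ᶠ e ∈ {e : Sym2 (Base d) | IsBaseEdge e ∧ ∀ x ∈ e, x ∈ A}, pairAbsDiff τ e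

/-- The discrete cube `Q_N(c) = c + {0,1,…,N−1}^d` as a finset. -/
noncomputable def cubeFinset {d : ℕ} (N : ℕ) (c : Base d) : Finset (Base d) :=
  Fintype.piFinset fun i => Finset.Ico (c i) (c i + (N : ℤ))

/-- The base point `N·⌊u/N⌋` of the cube of side `N` containing `u`. -/
def cubePt {d : ℕ} (N : ℕ) (u : Base d) : Base d := fun i => N * Int.fdiv (u i) N

/-- The average `τ^rough_N(u)` of `τ` over the cube of the partition `𝒫_N`
containing `u`. -/
noncomputable def roughAvg {d : ℕ} (N : ℕ) (τ : Base d → ℤ) (u : Base d) : ℝ :=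
  (∑ w ∈ cubeFinset N (cubePt N u), (τ w : ℝ)) / (N : ℝ) ^ d

/-- The integer nearest to `a`, with the convention `[k + 1/2] = k`. -/
noncomputable def nearestInt (a : ℝ) : ℤ := ⌈a - 1 / 2⌉

/-- The coarse graining `τ_N`. -/
noncomputable def coarse {d : ℕ} (N : ℕ) (τ : Base d → ℤ) (u : Base d) : ℤ :=
  nearestInt (roughAvg N τ u)

end DF

namespace DF

/-- The edge boundary of `A`: ordered pairs `(u,v)` with `u ∈ A`, `v ∉ A` adjacent. -/
def edgeBoundary {d : ℕ} (A : Set (Base d)) : Set (Base d × Base d) :=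
  {p | p.1 ∈ A ∧ p.2 ∉ A ∧ baseAdj p.1 p.2}

/-- The discrete box `v + {0,1,…,N−1}^d` as a set. -/
def box {d : ℕ} (v : Base d) (N : ℕ) : Set (Base d) :=
  {x | ∀ i, v i ≤ x i ∧ x i < v i + (N : ℤ)}

end DF

open DF

/-!
A line of `ℤ^d` parallel to the `i`-th axis that meets `A` has a first and a last point in `A`,
each the tail of an edge of `∂A`; hence `|∂A| ≥ 2 ∑ᵢ |πᵢ A|`, where `πᵢ` forgets the `i`-th
coordinate. The discrete Loomis–Whitney inequality `|A|^(d-1) ≤ ∏ᵢ |πᵢ A|`, proved by slicing `A`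
along one coordinate and applying Hölder's inequality to the slices, and AM–GM give the first
bound.

A cube of side `N` spanned by the directions `insert j s` is a stack of `N` translates of the
cube spanned by `s`. The numbers of points of `A` in two layers differ by at most the number of
mixed columns (those meeting both `A` and its complement), and every mixed column carries an edge
of `∂A` between consecutive layers. Induction on `s` gives
`min |A ∩ B| |B \ A| ≤ N |∂A ∩ (B × B)|`.
-/

open Finset
open scoped NNReal

theorem NNReal.sum_prod_rpow_le_prod_sum_rpow {κ ι : Type*} (T : Finset κ) (s : Finset ι)
    (f : ι → κ → ℝ≥0) {p : ι → ℝ} (hp : ∑ i ∈ s, p i = 1) (hp₀ : ∀ i ∈ s, 0 ≤ p i) :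
    ∑ t ∈ T, ∏ i ∈ s, f i t ^ p i ≤ ∏ i ∈ s, (∑ t ∈ T, f i t) ^ p i := by
  let _ : MeasurableSpace κ := ⊤
  have := ENNReal.lintegral_prod_norm_pow_le (μ := MeasureTheory.Measure.count.restrict T) s
    (f := fun i t => (f i t : ENNReal)) (fun _ _ => measurable_from_top.aemeasurable) hp hp₀
  simp only [MeasureTheory.lintegral_finset, MeasureTheory.Measure.count_singleton, mul_one] at this
  rw [← ENNReal.coe_le_coe]
  convert this using 1 <;> push_cast
  · exact sum_congr rfl fun t _ => prod_congr rfl fun i hi =>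
      ENNReal.coe_rpow_of_nonneg _ (hp₀ i hi)
  · exact prod_congr rfl fun i hi => by rw [ENNReal.coe_rpow_of_nonneg _ (hp₀ i hi)]; push_cast; rfl

theorem Finset.min_sum_le_sum_min_add {ι : Type*} (s : Finset ι) (a b : ι → ℕ) (m : ℕ)
    (ha : ∀ i ∈ s, ∀ j ∈ s, a i ≤ a j + m) (hb : ∀ i ∈ s, ∀ j ∈ s, b i ≤ b j + m) :
    min (∑ i ∈ s, a i) (∑ i ∈ s, b i) ≤ ∑ i ∈ s, min (a i) (b i) + #s * m := by
  by_cases hab : ∀ i ∈ s, a i ≤ b i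
  · rw [sum_congr rfl fun i hi => min_eq_left (hab i hi)]
    exact (min_le_left _ _).trans (Nat.le_add_right _ _)
  by_cases hba : ∀ i ∈ s, b i ≤ a i
  · rw [sum_congr rfl fun i hi => min_eq_right (hba i hi)]
    exact (min_le_right _ _).trans (Nat.le_add_right _ _)
  push Not at hab hba
  obtain ⟨p, hp, hpab⟩ := hab
  obtain ⟨q, hq, hqba⟩ := hba
  -- both signs of `a - b` occur, so `|a i - b i| ≤ 2 m` for every `i`
  have hclose : ∀ i ∈ s, a i + b i ≤ 2 * (min (a i) (b i) + m) := fun i hi => by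
    have := ha i hi q hq; have := hb q hq i hi; have := hb i hi p hp; have := ha p hp i hi
    omega
  have := sum_le_sum hclose
  rw [sum_add_distrib, ← mul_sum, sum_add_distrib, sum_const, smul_eq_mul] at this
  omega

theorem Nat.exists_flip {P : ℕ → Prop} {a b : ℕ} (hab : a ≤ b) (ha : P a) (hb : ¬ P b) :
    ∃ t, a ≤ t ∧ t < b ∧ P t ∧ ¬ P (t + 1) := by
  induction b, hab using Nat.le_induction with
  | base => exact absurd ha hb
  | succ b hab ih =>
    by_cases h : P b
    · exact ⟨b, hab, b.lt_succ_self, h, hb⟩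
    · obtain ⟨t, hat, htb, ht⟩ := ih h
      exact ⟨t, hat, htb.trans b.lt_succ_self, ht⟩

theorem Pi.eq_and_eq_of_single_eq_single {ι M : Type*} [DecidableEq ι] [Zero M] {i i' : ι}
    {e e' : M} (he : e ≠ 0) (h : (Pi.single i e : ι → M) = Pi.single i' e') : i = i' ∧ e = e' := by
  have hi := congrFun h i
  by_cases hii : i' = i
  · subst hii
    simpa using hi
  · simp only [Pi.single_eq_same, Pi.single_eq_of_ne' hii] at hi
    exact absurd hi he

namespace Finset

variable {ι α : Type*} [Fintype ι] [DecidableEq ι] [DecidableEq α] [Zero α]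

def projAlong (i : ι) (A : Finset (ι → α)) : Finset (ι → α) := A.image (Function.update · i 0)

lemma card_filter_le_card_projAlong (A : Finset (ι → α)) (j : ι) (t : α) :
    #(A.filter (· j = t)) ≤ #(A.projAlong j) := by
  refine card_le_card_of_injOn _ (fun x hx => mem_image_of_mem _ (mem_filter.1 hx).1) ?_
  intro x hx y hy hxy
  simp only [coe_filter, Set.mem_ofPred_eq] at hx hy
  ext i
  by_cases hi : i = j
  · rw [hi, hx.2, hy.2]
  · simpa [hi] using congrFun hxy i

lemma projAlong_filter_apply_eq {A : Finset (ι → α)} {i j : ι} (hij : i ≠ j) (t : α) :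
    (A.filter (· j = t)).projAlong i = (A.projAlong i).filter (· j = t) := by
  simp [projAlong, filter_image, Function.update_of_ne hij.symm]

lemma sum_card_projAlong_filter {A : Finset (ι → α)} {i j : ι} (hij : i ≠ j) :
    ∑ t ∈ A.image (· j), #((A.filter (· j = t)).projAlong i) = #(A.projAlong i) := by
  rw [card_eq_sum_card_fiberwise (f := (· j)) (t := A.image (· j))]
  · simp only [projAlong_filter_apply_eq hij]
  · intro y hy
    obtain ⟨x, hx, rfl⟩ := mem_image.1 hy
    simpa [Function.update_of_ne hij.symm] using mem_image_of_mem (· j) hx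

lemma sum_prod_card_projAlong_filter_rpow_le (A : Finset (ι → α)) {s : Finset ι} {j : ι}
    (hj : j ∉ s) {r : ℝ} (hr : #s * r = 1) (hr₀ : 0 ≤ r) :
    ∑ t ∈ A.image (· j), ∏ i ∈ s, (#((A.filter (· j = t)).projAlong i) : ℝ≥0) ^ r ≤
      ∏ i ∈ s, (#(A.projAlong i) : ℝ≥0) ^ r := by
  refine (NNReal.sum_prod_rpow_le_prod_sum_rpow _ s _ ?_ fun _ _ => hr₀).trans_eq ?_
  · rwa [sum_const, nsmul_eq_mul]
  · refine prod_congr rfl fun i hi => ?_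
    rw [← sum_card_projAlong_filter (ne_of_mem_of_not_mem hi hj)]
    push_cast
    rfl

/-- The discrete Loomis–Whitney inequality. -/
theorem card_pow_le_prod_card_projAlong (s : Finset ι) (A : Finset (ι → α)) (hA : A.Nonempty)
    (hconst : ∀ x ∈ A, ∀ y ∈ A, ∀ i ∉ s, x i = y i) :
    (#A : ℝ≥0) ^ (#s - 1) ≤ ∏ i ∈ s, (#(A.projAlong i) : ℝ≥0) := by
  induction s using Finset.induction_on generalizing A with
  | empty => simp
  | insert j s hj ih =>
    rw [card_insert_of_notMem hj, Nat.add_sub_cancel, prod_insert hj]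
    set m := #s
    set T := A.image (· j)
    set slice : α → Finset (ι → α) := fun t => A.filter (· j = t)
    have hslice_ne : ∀ t ∈ T, (slice t).Nonempty := by
      intro t ht
      obtain ⟨x, hx, rfl⟩ := mem_image.1 ht
      exact ⟨x, mem_filter.2 ⟨hx, rfl⟩⟩
    have hslice_const : ∀ t, ∀ x ∈ slice t, ∀ y ∈ slice t, ∀ i ∉ s, x i = y i := by
      intro t x hx y hy i hi
      rw [mem_filter] at hx hy
      by_cases hij : i = j
      · rw [hij, hx.2, hy.2]
      · exact hconst x hx.1 y hy.1 i (by simp [hij, hi])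
    rcases Nat.eq_zero_or_pos m with hm | hm
    · rw [hm, pow_zero, card_eq_zero.1 hm, prod_empty, mul_one, Nat.one_le_cast]
      exact (hA.image _).card_pos
    set r : ℝ := (m : ℝ)⁻¹
    have hm' : (0 : ℝ) < m := by exact_mod_cast hm
    have hslice : ∀ t ∈ T, (#(slice t) : ℝ≥0) ≤
        (#(A.projAlong j) : ℝ≥0) ^ r * ∏ i ∈ s, (#((slice t).projAlong i) : ℝ≥0) ^ r := by
      intro t ht
      rw [NNReal.finsetProd_rpow, ← NNReal.mul_rpow, NNReal.le_rpow_inv_iff hm',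
        NNReal.rpow_natCast, ← Nat.sub_add_cancel hm, pow_succ']
      exact mul_le_mul' (by exact_mod_cast card_filter_le_card_projAlong A j t)
        (ih _ (hslice_ne t ht) (hslice_const t))
    rw [← NNReal.rpow_natCast, ← NNReal.le_rpow_inv_iff hm', NNReal.mul_rpow,
      ← NNReal.finsetProd_rpow, card_eq_sum_card_fiberwise (fun x hx => mem_image_of_mem (· j) hx)]
    push_cast
    calc ∑ t ∈ T, (#(slice t) : ℝ≥0)
        ≤ ∑ t ∈ T, (#(A.projAlong j) : ℝ≥0) ^ r * ∏ i ∈ s, (#((slice t).projAlong i) : ℝ≥0) ^ r :=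
          sum_le_sum hslice
      _ ≤ _ := by
          rw [← mul_sum]
          exact mul_le_mul_right (sum_prod_card_projAlong_filter_rpow_le A hj
            (mul_inv_cancel₀ hm'.ne') (by positivity)) _

lemma card_projAlong_le_card_filter_add_single (A : Finset (ι → ℤ)) (i : ι) {e : ℤ} (he : e ≠ 0) :
    #(A.projAlong i) ≤ #(A.filter (· + Pi.single i e ∉ A)) := by
  refine card_le_card_of_surjOn (Function.update · i 0) ?_
  rintro _ hy
  obtain ⟨x, hx, rfl⟩ := mem_image.1 hy
  -- the point of the fibre through `x` that is extremal in the direction `e`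
  obtain ⟨y, hy, hmax⟩ := exists_max_image
    (A.filter (Function.update · i 0 = Function.update x i 0)) (e * · i) ⟨x, mem_filter.2 ⟨hx, rfl⟩⟩
  have hupd : Function.update (y + Pi.single i e) i 0 = Function.update y i 0 := by
    ext k; by_cases hk : k = i <;> simp [hk]
  refine ⟨y, mem_filter.2 ⟨(mem_filter.1 hy).1, fun hyA => ?_⟩, (mem_filter.1 hy).2⟩
  have := hmax _ (mem_filter.2 ⟨hyA, hupd.trans (mem_filter.1 hy).2⟩)
  simp only [Pi.add_apply, Pi.single_eq_same, mul_add] at this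
  nlinarith [mul_self_pos.2 he]

end Finset

namespace DF

variable {d : ℕ}

lemma baseAdj_add_single (u : Base d) (i : Fin d) {e : ℤ} (he : |e| = 1) :
    baseAdj u (u + Pi.single i e) := by
  have : dist1 u (u + Pi.single i e) = ∑ k, |Pi.single i e k| := by simp [dist1, abs_neg]
  rw [baseAdj, this, sum_eq_single i (fun _ _ hk => by simp [hk]) (by simp)]
  simpa using he

lemma baseAdj.symm {u v : Base d} (h : baseAdj u v) : baseAdj v u := by
  simpa only [baseAdj, dist1, abs_sub_comm] using h

lemma abs_sub_le_one_of_baseAdj {u v : Base d} (h : baseAdj u v) (i : Fin d) : |u i - v i| ≤ 1 :=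
  h ▸ single_le_sum (f := fun k => |u k - v k|) (fun _ _ => abs_nonneg _) (mem_univ i)

lemma finite_edgeBoundary {A : Set (Base d)} (hA : A.Finite) : (edgeBoundary A).Finite := by
  refine (hA.prod (hA.biUnion fun u _ => Set.finite_Icc (u - 1) (u + 1))).subset ?_
  rintro ⟨u, v⟩ ⟨hu, -, huv⟩
  refine ⟨hu, Set.mem_biUnion hu ⟨fun i => ?_, fun i => ?_⟩⟩ <;>
    have := abs_le.1 (abs_sub_le_one_of_baseAdj huv i) <;>
    simp only [Pi.sub_apply, Pi.add_apply, Pi.one_apply] <;> linarith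

lemma two_mul_sum_card_projAlong_le_ncard_edgeBoundary (A : Finset (Base d)) :
    2 * ∑ i, #(A.projAlong i) ≤ (edgeBoundary (A : Set (Base d))).ncard := by
  classical
  set I : Finset (Fin d × ℤ) := univ ×ˢ {1, -1}
  set out : Fin d × ℤ → Finset (Base d × Base d) := fun k =>
    (A.filter (· + Pi.single k.1 k.2 ∉ A)).image fun u => (u, u + Pi.single k.1 k.2)
  have hI : ∀ k ∈ I, |k.2| = 1 := by simp [I]
  have hdisj : (I : Set (Fin d × ℤ)).PairwiseDisjoint out := by
    rintro ⟨i, e⟩ hk ⟨i', e'⟩ - hne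
    refine disjoint_left.2 fun p hp hp' => hne ?_
    obtain ⟨u, -, rfl⟩ := mem_image.1 hp
    obtain ⟨u', -, h⟩ := mem_image.1 hp'
    obtain ⟨rfl, h⟩ := Prod.mk.inj h
    have he : e ≠ 0 := fun he => by simpa [he] using hI _ hk
    obtain ⟨rfl, rfl⟩ := Pi.eq_and_eq_of_single_eq_single he (add_left_cancel h).symm
    rfl
  calc 2 * ∑ i, #(A.projAlong i)
      ≤ ∑ k ∈ I, #(out k) := by
        rw [sum_product, mul_sum]
        refine sum_le_sum fun i _ => ?_
        rw [sum_pair (by norm_num), two_mul]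
        simp only [out, card_image_of_injective _ (fun u v h => (Prod.mk.inj h).1)]
        exact add_le_add (A.card_projAlong_le_card_filter_add_single i one_ne_zero)
          (A.card_projAlong_le_card_filter_add_single i (by norm_num))
    _ = #(I.biUnion out) := (card_biUnion hdisj).symm
    _ ≤ (edgeBoundary (A : Set (Base d))).ncard := by
        rw [← Set.ncard_coe_finset]
        refine Set.ncard_le_ncard ?_ (finite_edgeBoundary A.finite_toSet)
        intro p hp
        obtain ⟨k, hk, hp⟩ := mem_biUnion.1 (mem_coe.1 hp)
        obtain ⟨u, hu, rfl⟩ := mem_image.1 hp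
        exact ⟨(mem_filter.1 hu).1, (mem_filter.1 hu).2, baseAdj_add_single u k.1 (hI k hk)⟩

theorem two_mul_mul_card_rpow_le_ncard_edgeBoundary (hd : 1 ≤ d) (A : Finset (Base d))
    (hA : A.Nonempty) :
    2 * (d : ℝ) * (#A : ℝ) ^ (1 - 1 / (d : ℝ)) ≤ (edgeBoundary (A : Set (Base d))).ncard := by
  have hd' : (0 : ℝ) < d := by exact_mod_cast hd
  have hLW : (#A : ℝ) ^ ((d : ℝ) - 1) ≤ ∏ i, (#(A.projAlong i) : ℝ) := by
    rw [← Nat.cast_one, ← Nat.cast_sub hd, Real.rpow_natCast]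
    have := card_pow_le_prod_card_projAlong univ A hA fun _ _ _ _ i hi => absurd (mem_univ i) hi
    rw [card_univ, Fintype.card_fin] at this
    exact_mod_cast this
  have hAMGM := Real.geom_mean_le_arith_mean univ (fun _ => 1) (fun i => (#(A.projAlong i) : ℝ))
    (fun _ _ => zero_le_one) (by simpa using hd') (fun _ _ => by positivity)
  simp only [Real.rpow_one, sum_const, card_univ, Fintype.card_fin, nsmul_eq_mul, mul_one,
    one_mul] at hAMGM
  calc 2 * (d : ℝ) * (#A : ℝ) ^ (1 - 1 / (d : ℝ))
      = 2 * d * ((#A : ℝ) ^ ((d : ℝ) - 1)) ^ (d : ℝ)⁻¹ := by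
        rw [← Real.rpow_mul (by positivity)]
        congr 2
        field_simp
    _ ≤ 2 * d * (∏ i, (#(A.projAlong i) : ℝ)) ^ (d : ℝ)⁻¹ := by gcongr
    _ ≤ 2 * d * ((∑ i, (#(A.projAlong i) : ℝ)) / d) := by gcongr
    _ = 2 * ∑ i, (#(A.projAlong i) : ℝ) := by field_simp
    _ ≤ (edgeBoundary (A : Set (Base d))).ncard := by
        exact_mod_cast two_mul_sum_card_projAlong_le_ncard_edgeBoundary A

open scoped Classical in
noncomputable def edgeBoundaryIn (A : Set (Base d)) (S : Finset (Base d)) :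
    Finset (Base d × Base d) :=
  (S ×ˢ S).filter (· ∈ edgeBoundary A)

section Stack

open scoped Classical

variable (A : Set (Base d)) (W : Finset (Base d)) (j : Fin d) (N : ℕ)

def layer (t : ℕ) : Finset (Base d) := W.map (addRightEmbedding (Pi.single j (t : ℤ)))

def stack : Finset (Base d) := (range N).biUnion (layer W j)

noncomputable def mixedColumns : Finset (Base d) :=
  W.filter fun w => (∃ t < N, w + Pi.single j (t : ℤ) ∈ A) ∧ ∃ t < N, w + Pi.single j (t : ℤ) ∉ A

variable {W j N}

lemma mem_layer {t : ℕ} {x : Base d} :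
    x ∈ layer W j t ↔ ∃ w ∈ W, w + Pi.single j (t : ℤ) = x := by
  simp [layer]

lemma apply_eq_of_mem_layer {c : ℤ} (hW : ∀ w ∈ W, w j = c) {t : ℕ} {x : Base d}
    (hx : x ∈ layer W j t) : x j = c + t := by
  obtain ⟨w, hw, rfl⟩ := mem_layer.1 hx
  simp [hW w hw]

lemma layer_subset_stack {t : ℕ} (ht : t < N) : layer W j t ⊆ stack W j N :=
  subset_biUnion_of_mem (layer W j) (mem_range.2 ht)

lemma pairwiseDisjoint_layer {c : ℤ} (hW : ∀ w ∈ W, w j = c) (s : Set ℕ) :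
    s.PairwiseDisjoint (layer W j) := by
  intro t _ t' _ htt'
  refine disjoint_left.2 fun x hx hx' => htt' ?_
  have := (apply_eq_of_mem_layer hW hx).symm.trans (apply_eq_of_mem_layer hW hx')
  omega

lemma card_filter_stack {c : ℤ} (hW : ∀ w ∈ W, w j = c) (p : Base d → Prop) [DecidablePred p] :
    #((stack W j N).filter p) = ∑ t ∈ range N, #((layer W j t).filter p) := by
  rw [stack, filter_biUnion, card_biUnion]
  exact fun t ht t' ht' h => disjoint_filter_filter (pairwiseDisjoint_layer hW _ ht ht' h)

lemma card_filter_layer_le_add_card_mixedColumns {s t : ℕ} (hs : s < N) (ht : t < N) :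
    #((layer W j s).filter (· ∈ A)) ≤
      #((layer W j t).filter (· ∈ A)) + #(mixedColumns A W j N) := by
  simp only [layer, filter_map, card_map]
  refine (card_le_card fun w hw => ?_).trans (card_union_le _ _)
  rw [mem_filter, Function.comp_apply, addRightEmbedding_apply] at hw
  by_cases hwt : w + Pi.single j (t : ℤ) ∈ A
  · exact mem_union_left _ (mem_filter.2 ⟨hw.1, hwt⟩)
  · exact mem_union_right _ (mem_filter.2 ⟨hw.1, ⟨s, hs, hw.2⟩, ⟨t, ht, hwt⟩⟩)

lemma mixedColumns_compl : mixedColumns Aᶜ W j N = mixedColumns A W j N := by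
  simp only [mixedColumns, Set.mem_compl_iff, not_not, and_comm]

lemma update_add_single_of_apply_eq {w : Base d} {c : ℤ} (hw : w j = c) (x : ℤ) :
    Function.update (w + Pi.single j x) j c = w := by
  ext k; by_cases hk : k = j <;> simp [hk, hw]

lemma exists_crossing_edge {c : ℤ} (hW : ∀ w ∈ W, w j = c) {w : Base d}
    (hw : w ∈ mixedColumns A W j N) :
    ∃ p ∈ edgeBoundaryIn A (stack W j N), p.1 j ≠ p.2 j ∧ Function.update p.1 j c = w := by
  obtain ⟨hwW, ⟨s, hs, hsA⟩, ⟨t, ht, htA⟩⟩ := mem_filter.1 hw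
  set x : ℕ → Base d := fun u => w + Pi.single j (u : ℤ)
  have hx_mem : ∀ u < N, x u ∈ stack W j N := fun u hu =>
    layer_subset_stack hu (mem_layer.2 ⟨w, hwW, rfl⟩)
  have hx_succ : ∀ u, x (u + 1) = x u + Pi.single j 1 := fun u => by
    simp [x, add_assoc, ← Pi.single_add]
  have hx_apply : ∀ u, x u j = c + u := fun u => by simp [x, hW w hwW]
  have hadj : ∀ u, baseAdj (x u) (x (u + 1)) := fun u =>
    hx_succ u ▸ baseAdj_add_single _ _ (by simp)
  have hcross : ∀ u, x u j ≠ x (u + 1) j := fun u => by simp only [hx_apply]; push_cast; omega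
  rcases le_total s t with hst | hts
  · obtain ⟨u, -, hut, huA, hu1A⟩ := Nat.exists_flip (P := (x · ∈ A)) hst hsA htA
    refine ⟨(x u, x (u + 1)), ?_, hcross u, update_add_single_of_apply_eq (hW w hwW) _⟩
    exact mem_filter.2 ⟨mem_product.2 ⟨hx_mem u (by omega), hx_mem (u + 1) (by omega)⟩,
      huA, hu1A, hadj u⟩
  · obtain ⟨u, -, hus, huA, hu1A⟩ := Nat.exists_flip (P := (x · ∉ A)) hts htA (not_not.2 hsA)
    refine ⟨(x (u + 1), x u), ?_, (hcross u).symm, update_add_single_of_apply_eq (hW w hwW) _⟩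
    exact mem_filter.2 ⟨mem_product.2 ⟨hx_mem (u + 1) (by omega), hx_mem u (by omega)⟩,
      not_not.1 hu1A, huA, (hadj u).symm⟩

lemma sum_card_edgeBoundaryIn_layer_add_card_mixedColumns_le {c : ℤ} (hW : ∀ w ∈ W, w j = c) :
    ∑ t ∈ range N, #(edgeBoundaryIn A (layer W j t)) + #(mixedColumns A W j N) ≤
      #(edgeBoundaryIn A (stack W j N)) := by
  set E := edgeBoundaryIn A (stack W j N)
  rw [← card_filter_add_card_filter_not (s := E) (fun p => p.1 j = p.2 j)]
  refine add_le_add ?_ (card_le_card_of_surjOn (fun p => Function.update p.1 j c) ?_)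
  · rw [← card_biUnion fun t ht t' ht' h => ?_]
    · refine card_le_card fun p hp => ?_
      obtain ⟨t, ht, hp⟩ := mem_biUnion.1 hp
      obtain ⟨⟨hp₁, hp₂⟩, hpA⟩ := mem_filter.1 hp |>.imp_left mem_product.1
      refine mem_filter.2 ⟨mem_filter.2 ⟨mem_product.2 ⟨layer_subset_stack (mem_range.1 ht) hp₁,
        layer_subset_stack (mem_range.1 ht) hp₂⟩, hpA⟩, ?_⟩
      rw [apply_eq_of_mem_layer hW hp₁, apply_eq_of_mem_layer hW hp₂]
    · refine disjoint_left.2 fun p hp hp' => ?_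
      exact disjoint_left.1 (pairwiseDisjoint_layer hW _ ht ht' h)
        (mem_product.1 (mem_filter.1 hp).1).1 (mem_product.1 (mem_filter.1 hp').1).1
  · intro w hw
    obtain ⟨p, hp, hpj, rfl⟩ := exists_crossing_edge A hW hw
    exact ⟨p, mem_filter.2 ⟨hp, hpj⟩, rfl⟩

lemma min_card_filter_stack_le {c : ℤ} (hW : ∀ w ∈ W, w j = c)
    (hlayer : ∀ t < N, min #((layer W j t).filter (· ∈ A)) #((layer W j t).filter (· ∉ A)) ≤
      N * #(edgeBoundaryIn A (layer W j t))) :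
    min #((stack W j N).filter (· ∈ A)) #((stack W j N).filter (· ∉ A)) ≤
      N * #(edgeBoundaryIn A (stack W j N)) := by
  rw [card_filter_stack hW, card_filter_stack hW]
  calc _ ≤ ∑ t ∈ range N, min #((layer W j t).filter (· ∈ A)) #((layer W j t).filter (· ∉ A)) +
          #(range N) * #(mixedColumns A W j N) := by
        refine min_sum_le_sum_min_add _ _ _ _ (fun s hs t ht => ?_) (fun s hs t ht => ?_)
        · exact card_filter_layer_le_add_card_mixedColumns A (mem_range.1 hs) (mem_range.1 ht)
        · simpa only [mixedColumns_compl, Set.mem_compl_iff] using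
            card_filter_layer_le_add_card_mixedColumns Aᶜ (mem_range.1 hs) (mem_range.1 ht)
    _ ≤ ∑ t ∈ range N, N * #(edgeBoundaryIn A (layer W j t)) + N * #(mixedColumns A W j N) := by
        rw [card_range]
        gcongr with t ht
        exact hlayer t (mem_range.1 ht)
    _ ≤ N * #(edgeBoundaryIn A (stack W j N)) := by
        rw [← mul_sum, ← mul_add]
        exact Nat.mul_le_mul_left _ (sum_card_edgeBoundaryIn_layer_add_card_mixedColumns_le A hW)

end Stack

noncomputable def cubeAlong (s : Finset (Fin d)) (c : Base d) (N : ℕ) : Finset (Base d) :=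
  Fintype.piFinset fun i => if i ∈ s then Ico (c i) (c i + N) else {c i}

lemma mem_cubeAlong {s : Finset (Fin d)} {c x : Base d} {N : ℕ} :
    x ∈ cubeAlong s c N ↔ ∀ i, if i ∈ s then c i ≤ x i ∧ x i < c i + N else x i = c i := by
  simp only [cubeAlong, Fintype.mem_piFinset]
  refine forall_congr' fun i => ?_
  split_ifs <;> simp

lemma cubeAlong_empty (c : Base d) (N : ℕ) : cubeAlong ∅ c N = {c} := by
  ext x
  simp [mem_cubeAlong, funext_iff]

lemma cubeAlong_univ (c : Base d) (N : ℕ) : cubeAlong univ c N = cubeFinset N c := by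
  simp [cubeAlong, cubeFinset]

lemma apply_eq_of_mem_cubeAlong {s : Finset (Fin d)} {c x : Base d} {N : ℕ} {j : Fin d}
    (hj : j ∉ s) (hx : x ∈ cubeAlong s c N) : x j = c j := by
  simpa [hj] using mem_cubeAlong.1 hx j

lemma cubeAlong_add (s : Finset (Fin d)) (c v : Base d) (N : ℕ) :
    cubeAlong s (c + v) N = (cubeAlong s c N).map (addRightEmbedding v) := by
  ext x
  rw [mem_map]
  constructor
  · intro hx
    refine ⟨x - v, mem_cubeAlong.2 fun i => ?_, sub_add_cancel x v⟩
    have := mem_cubeAlong.1 hx i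
    split_ifs at this ⊢ <;> simp only [Pi.add_apply, Pi.sub_apply] at this ⊢ <;> omega
  · rintro ⟨y, hy, rfl⟩
    refine mem_cubeAlong.2 fun i => ?_
    have := mem_cubeAlong.1 hy i
    split_ifs at this ⊢ <;> simp only [Pi.add_apply, addRightEmbedding_apply] at this ⊢ <;> omega

lemma layer_cubeAlong (s : Finset (Fin d)) (c : Base d) (N : ℕ) (j : Fin d) (t : ℕ) :
    layer (cubeAlong s c N) j t = cubeAlong s (c + Pi.single j (t : ℤ)) N :=
  (cubeAlong_add s c _ N).symm

lemma cubeAlong_insert {s : Finset (Fin d)} {j : Fin d} (hj : j ∉ s) (c : Base d) (N : ℕ) :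
    cubeAlong (insert j s) c N = stack (cubeAlong s c N) j N := by
  ext x
  simp only [stack, mem_biUnion, mem_range, layer_cubeAlong, mem_cubeAlong]
  constructor
  · intro hx
    have hxj := hx j
    rw [if_pos (mem_insert_self j s)] at hxj
    refine ⟨(x j - c j).toNat, by omega, fun i => ?_⟩
    have hxi := hx i
    by_cases hij : i = j
    · subst hij
      simp only [hj, if_false, Pi.add_apply, Pi.single_eq_same, Int.ofNat_toNat]
      omega
    · simp only [mem_insert, hij, false_or] at hxi
      simpa [Pi.single_apply, hij] using hxi
  · rintro ⟨t, ht, hx⟩ i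
    have hxi := hx i
    by_cases hij : i = j
    · subst hij
      simp only [hj, if_false, Pi.add_apply, Pi.single_eq_same, mem_insert_self, if_true] at hxi ⊢
      omega
    · simpa [Pi.single_apply, hij] using hxi

open scoped Classical in
theorem min_card_filter_cubeAlong_le (A : Set (Base d)) (N : ℕ) (s : Finset (Fin d))
    (c : Base d) :
    min #((cubeAlong s c N).filter (· ∈ A)) #((cubeAlong s c N).filter (· ∉ A)) ≤
      N * #(edgeBoundaryIn A (cubeAlong s c N)) := by
  induction s using Finset.induction_on generalizing c with
  | empty => by_cases hc : c ∈ A <;> simp [cubeAlong_empty, filter_singleton, hc]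
  | insert j s hj ih =>
    rw [cubeAlong_insert hj]
    refine min_card_filter_stack_le A (fun w hw => apply_eq_of_mem_cubeAlong hj hw) fun t _ => ?_
    rw [layer_cubeAlong]
    exact ih _

lemma box_eq_coe_cubeFinset (v : Base d) (N : ℕ) : box v N = ↑(cubeFinset N v) := by
  ext x
  simp [box, cubeFinset]

theorem min_ncard_le_mul_ncard_edgeBoundary_box (A : Set (Base d)) (v : Base d) (N : ℕ) :
    min (A ∩ box v N).ncard (box v N \ A).ncard ≤
      N * {p ∈ edgeBoundary A | p.1 ∈ box v N ∧ p.2 ∈ box v N}.ncard := by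
  classical
  have := min_card_filter_cubeAlong_le A N univ v
  rw [cubeAlong_univ] at this
  convert this using 3 <;> rw [← Set.ncard_coe_finset] <;> congr 1 <;> ext <;>
    simp [box_eq_coe_cubeFinset, edgeBoundaryIn, and_comm]

end DF

/-- **Isoperimetric inequality on `ℤ^d`.** For every nonempty finite
`A ⊂ ℤ^d`, `|∂A| ≥ 2d |A|^{1−1/d}`; moreover for every cube `B` of side `N`,
`|∂A ∩ (B×B)| ≥ (2/(3N)) min{|A∩B|, |B∖A|}`. -/
theorem isoperimetric_inequality_on_Zd
    (d : ℕ) (hd : 1 ≤ d) (A : Set (Base d)) (hA : A.Finite) (hA0 : A.Nonempty) :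
    (2 * (d : ℝ)) * (A.ncard : ℝ) ^ (1 - 1 / (d : ℝ)) ≤ ((edgeBoundary A).ncard : ℝ) ∧
    ∀ (v : Base d) (N : ℕ), 0 < N →
      (2 / (3 * (N : ℝ))) *
          min ((A ∩ box v N).ncard : ℝ) (((box v N) \ A).ncard : ℝ) ≤
        (({p ∈ edgeBoundary A | p.1 ∈ box v N ∧ p.2 ∈ box v N}).ncard : ℝ) := by
  refine ⟨?_, fun v N hN => ?_⟩
  · have := two_mul_mul_card_rpow_le_ncard_edgeBoundary hd hA.toFinset (hA.toFinset_nonempty.2 hA0)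
    rwa [Set.Finite.coe_toFinset, ← Set.ncard_eq_toFinset_card A hA] at this
  · set E := ({p ∈ edgeBoundary A | p.1 ∈ box v N ∧ p.2 ∈ box v N}).ncard
    have hN' : (0 : ℝ) < N := by exact_mod_cast hN
    have h : (min (A ∩ box v N).ncard (box v N \ A).ncard : ℝ) ≤ N * E := by
      exact_mod_cast min_ncard_le_mul_ncard_edgeBoundary_box A v N
    calc (2 / (3 * (N : ℝ))) * min ((A ∩ box v N).ncard : ℝ) ((box v N \ A).ncard : ℝ)
        ≤ (2 / (3 * (N : ℝ))) * (N * E) := by gcongr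
      _ = 2 / 3 * E := by field_simp
      _ ≤ E := by linarith [(Nat.cast_nonneg E : (0 : ℝ) ≤ E)]
end

section
/- Let d ≥ 1. For every shift τ : ℤ^d → ℤ and every positive integer N, TV(τ_N) ≤ 10d·TV(τ). -/
/-!
Write `S(z)` for the sum of `τ` over the cube containing `z`. Since `τ_N` is constant on cubes,
every segment from `z` to `z + N eᵢ` crosses exactly one cube boundary, so
`N · Σ_z |τ_N(z + eᵢ) − τ_N(z)| ≤ Σ_z |τ_N(z + N eᵢ) − τ_N(z)|`. At both ends of such a segment
compare `τ_N` with `τ`: rounding costs at most a factor 2 against an integer, so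
`N^d |τ(z) − τ_N(z)| ≤ 2 |N^d τ(z) − S(z)|`, and the discrete Poincaré inequality on each cube gives
`Σ_z |N^d τ(z) − S(z)| ≤ N^(d+1) TV(τ)`. With `Σ_z |τ(z + N eᵢ) − τ(z)| ≤ N Σ_z |τ(z + eᵢ) − τ(z)|`
this yields `TV(τ_N) ≤ (4d + 1) TV(τ)`.
-/

open Function Finset

namespace DF

lemma sum_le_finsum {α M : Type*} [AddCommMonoid M] [PartialOrder M] [IsOrderedAddMonoid M]
    {f : α → M} (s : Finset α) (hf₀ : ∀ a, 0 ≤ f a) (hf : f.HasFiniteSupport) :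
    ∑ a ∈ s, f a ≤ ∑ᶠ a, f a := by
  classical
  rw [finsum_eq_sum_of_support_subset f (s := s ∪ hf.toFinset)
    fun a ha => mem_coe.mpr (mem_union_right _ (hf.mem_toFinset.mpr ha))]
  exact sum_le_sum_of_subset_of_nonneg subset_union_left fun _ _ _ => hf₀ _

section Variation

variable {G : Type*} [AddCommGroup G]

noncomputable def variationAlong (g : G → ℤ) (a : G) : ℤ := ∑ᶠ z, |g (z + a) - g z|

variable {g : G → ℤ}

lemma hasFiniteSupport_abs_sub_comp_add (hg : g.HasFiniteSupport) (a : G) :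
    HasFiniteSupport fun z => |g (z + a) - g z| :=
  ((hg.comp_of_injective (add_left_injective a)).sub hg).comp abs_zero

lemma hasFiniteSupport_sum_range_abs_sub (hg : g.HasFiniteSupport) (a : G) (n : ℕ) :
    HasFiniteSupport fun z => ∑ t ∈ range n, |g (z + t • a + a) - g (z + t • a)| :=
  HasFiniteSupport.sum (fun t => (hasFiniteSupport_abs_sub_comp_add hg a).comp_of_injective
    (add_left_injective (t • a))) _

lemma finsum_sum_range_abs_sub (hg : g.HasFiniteSupport) (a : G) (n : ℕ) :
    ∑ᶠ z, ∑ t ∈ range n, |g (z + t • a + a) - g (z + t • a)| = n * variationAlong g a := by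
  rw [finsum_sum_comm (range n) (fun z t => |g (z + t • a + a) - g (z + t • a)|) fun t _ =>
    (hasFiniteSupport_abs_sub_comp_add hg a).comp_of_injective (add_left_injective (t • a))]
  have htrans (t : ℕ) : ∑ᶠ z, |g (z + t • a + a) - g (z + t • a)| = variationAlong g a :=
    finsum_comp_equiv (Equiv.addRight (t • a)) (f := fun z => |g (z + a) - g z|)
  simp [htrans]

lemma variationAlong_nsmul_le (hg : g.HasFiniteSupport) (a : G) (n : ℕ) :
    variationAlong g (n • a) ≤ n * variationAlong g a := by
  rw [← finsum_sum_range_abs_sub hg]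
  refine finsum_le_finsum' (hasFiniteSupport_abs_sub_comp_add hg _)
    (hasFiniteSupport_sum_range_abs_sub hg a n) fun z => ?_
  have htel := sum_range_sub (fun t : ℕ => g (z + t • a)) n
  simp only [succ_nsmul, ← add_assoc, zero_nsmul, add_zero] at htel
  calc |g (z + n • a) - g z| = |∑ t ∈ range n, (g (z + t • a + a) - g (z + t • a))| := by
        rw [htel]
    _ ≤ _ := abs_sum_le_sum_abs _ _

end Variation

section Lattice

variable {d : ℕ}

lemma baseAdj_iff {u v : Base d} :
    baseAdj u v ↔ ∃ i, v = u + Pi.single i 1 ∨ u = v + Pi.single i 1 := by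
  constructor
  · intro h
    unfold baseAdj dist1 at h
    obtain ⟨i, -, hi⟩ := exists_ne_zero_of_sum_ne_zero (h.trans_ne one_ne_zero)
    have hsplit := add_sum_erase univ (fun j => |u j - v j|) (mem_univ i)
    have hrest : ∑ j ∈ univ.erase i, |u j - v j| = 0 := by
      have := sum_nonneg fun j (_ : j ∈ univ.erase i) => abs_nonneg (u j - v j)
      have := abs_nonneg (u i - v i)
      omega
    have hzero : ∀ j ≠ i, u j = v j := fun j hj => by
      have := (sum_eq_zero_iff_of_nonneg fun j _ => abs_nonneg (u j - v j)).mp hrest j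
        (mem_erase.mpr ⟨hj, mem_univ j⟩)
      exact sub_eq_zero.mp (abs_eq_zero.mp this)
    have hi₁ : |u i - v i| = 1 := by omega
    refine ⟨i, ?_⟩
    rcases abs_eq zero_le_one |>.mp hi₁ with h₁ | h₁
    · right
      ext j
      by_cases hj : j = i
      · subst hj
        simp only [Pi.add_apply, Pi.single_eq_same]
        omega
      · simp [hj, hzero j hj]
    · left
      ext j
      by_cases hj : j = i
      · subst hj
        simp only [Pi.add_apply, Pi.single_eq_same]
        omega
      · simp [hj, hzero j hj]
  · rintro ⟨i, rfl | rfl⟩ <;>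
      simp [baseAdj, dist1, Pi.single_apply, apply_ite, abs_sub_comm]

def edgeOf (p : Base d × Fin d) : Sym2 (Base d) := s(p.1, p.1 + Pi.single p.2 1)

lemma edgeOf_injective : Injective (edgeOf (d := d)) := by
  rintro ⟨a, i⟩ ⟨b, j⟩ h
  rcases Sym2.eq_iff.mp h with ⟨rfl, h⟩ | ⟨rfl, h⟩
  · have := congrFun (add_left_cancel h) i
    by_cases hij : i = j
    · rw [hij]
    · simp [hij] at this
  · have := congrFun h i
    simp only [Pi.add_apply, Pi.single_apply] at this
    split_ifs at this <;> omega

lemma range_edgeOf : Set.range (edgeOf (d := d)) = {e | IsBaseEdge e} := by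
  ext e
  constructor
  · rintro ⟨⟨u, i⟩, rfl⟩
    exact ⟨u, _, baseAdj_iff.mpr ⟨i, Or.inl rfl⟩, rfl⟩
  · rintro ⟨u, v, huv, rfl⟩
    obtain ⟨i, rfl | rfl⟩ := baseAdj_iff.mp huv
    · exact ⟨(u, i), rfl⟩
    · exact ⟨(v, i), Sym2.eq_swap⟩

lemma TV_eq_finsum_edgeOf (g : Base d → ℤ) :
    TV g = ∑ᶠ p : Base d × Fin d, |g (p.1 + Pi.single p.2 1) - g p.1| := by
  rw [TV, ← range_edgeOf, finsum_mem_range edgeOf_injective]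
  simp [edgeOf, pairAbsDiff, abs_sub_comm]

lemma TV_nonneg (g : Base d → ℤ) : 0 ≤ TV g :=
  TV_eq_finsum_edgeOf g ▸ finsum_nonneg fun _ => abs_nonneg _

lemma TV_eq_sum_variationAlong {g : Base d → ℤ} (hg : g.HasFiniteSupport) :
    TV g = ∑ i, variationAlong g (Pi.single i 1) := by
  have hfin : HasFiniteSupport fun p : Fin d × Base d => |g (p.2 + Pi.single p.1 1) - g p.2| := by
    refine (Set.finite_iUnion fun i => (Set.finite_singleton i).prod
      (hasFiniteSupport_abs_sub_comp_add hg (Pi.single i 1))).subset ?_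
    rintro ⟨i, z⟩ h
    exact Set.mem_iUnion.mpr ⟨i, rfl, h⟩
  calc TV g = ∑ᶠ p : Fin d × Base d, |g (p.2 + Pi.single p.1 1) - g p.2| := by
        rw [TV_eq_finsum_edgeOf]
        exact (finsum_comp_equiv (Equiv.prodComm _ _)).symm
    _ = _ := by
        rw [finsum_curry _ hfin, finsum_eq_sum_of_fintype]
        rfl

end Lattice

section Rounding

lemma nearestInt_zero : nearestInt 0 = 0 := by
  norm_num [nearestInt, Int.ceil_eq_zero_iff]

lemma abs_nearestInt_sub_le (a : ℝ) : |(nearestInt a : ℝ) - a| ≤ 1 / 2 := by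
  have h₁ : a - 1 / 2 ≤ nearestInt a := Int.le_ceil _
  have h₂ : (nearestInt a : ℝ) < a - 1 / 2 + 1 := Int.ceil_lt_add_one _
  rw [abs_le]
  constructor <;> linarith

lemma abs_sub_nearestInt_le (k : ℤ) (a : ℝ) : |(k : ℝ) - nearestInt a| ≤ 2 * |k - a| := by
  by_cases hk : k = nearestInt a
  · simp [hk]
  have hone : (1 : ℝ) ≤ |(k : ℝ) - nearestInt a| := by
    exact_mod_cast Int.one_le_abs (sub_ne_zero.mpr hk)
  have htri := abs_sub_le (k : ℝ) a (nearestInt a)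
  have := abs_nearestInt_sub_le a
  rw [abs_sub_comm a] at htri
  linarith

end Rounding

section OneDimensional

lemma abs_sub_le_sum_Ico (h : ℤ → ℤ) {a b s t : ℤ} (hs : s ∈ Ico a b) (ht : t ∈ Ico a b) :
    |h t - h s| ≤ ∑ r ∈ Ico a b, |h (r + 1) - h r| := by
  wlog hst : s ≤ t generalizing s t
  · rw [abs_sub_comm]
    exact this ht hs (le_of_not_ge hst)
  have hpath : |h t - h s| ≤ ∑ r ∈ Ico s t, |h (r + 1) - h r| := by
    clear ht
    induction t, hst using Int.leInduction with
    | base => simp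
    | succ n hsn ih =>
      rw [← insert_Ico_right_eq_Ico_add_one hsn, sum_insert (by simp)]
      exact (abs_sub_le _ (h n) _).trans (add_le_add_right ih _)
  refine hpath.trans (sum_le_sum_of_subset_of_nonneg ?_ fun _ _ _ => abs_nonneg _)
  exact Ico_subset_Ico (mem_Ico.mp hs).1 (mem_Ico.mp ht).2.le

lemma sum_abs_mul_sub_sum_Ico_le (h : ℤ → ℤ) (a : ℤ) (n : ℕ) :
    ∑ t ∈ Ico a (a + n), |n * h t - ∑ s ∈ Ico a (a + n), h s| ≤
      (n : ℤ) ^ 2 * ∑ r ∈ Ico a (a + n), |h (r + 1) - h r| := by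
  set I := Ico a (a + n)
  set L := ∑ r ∈ I, |h (r + 1) - h r|
  have hcard : (#I : ℤ) = n := by simp [I]
  have hpoint : ∀ t ∈ I, |n * h t - ∑ s ∈ I, h s| ≤ n * L := fun t ht =>
    calc |n * h t - ∑ s ∈ I, h s| = |∑ s ∈ I, (h t - h s)| := by
          rw [sum_sub_distrib, sum_const, nsmul_eq_mul, hcard]
      _ ≤ ∑ s ∈ I, |h t - h s| := abs_sum_le_sum_abs _ _
      _ ≤ ∑ _s ∈ I, L := sum_le_sum fun s hs => abs_sub_le_sum_Ico h hs ht
      _ = n * L := by rw [sum_const, nsmul_eq_mul, hcard]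
  calc _ ≤ ∑ _t ∈ I, n * L := sum_le_sum hpoint
    _ = (n : ℤ) ^ 2 * L := by rw [sum_const, nsmul_eq_mul, hcard]; ring

lemma sum_range_abs_sub_comp_ediv_le {N : ℕ} (hN : 0 < N) (ψ : ℤ → ℤ) (x : ℤ) :
    ∑ t ∈ range N, |ψ ((x + (t + 1)) / N) - ψ ((x + t) / N)| ≤ |ψ ((x + N) / N) - ψ (x / N)| := by
  have hN' : (0 : ℤ) < N := by exact_mod_cast hN
  have hx := Int.mul_ediv_add_emod x N
  have hr₀ := Int.emod_nonneg x hN'.ne'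
  have hr₁ := Int.emod_lt_of_pos x hN'
  have hlow (y : ℤ) (h₀ : 0 ≤ y) (h₁ : y < N - x % N) : (x + y) / N = x / N := by
    rw [Int.ediv_eq_iff_of_pos hN']
    constructor <;> nlinarith
  have hhigh (y : ℤ) (h₀ : N - x % N ≤ y) (h₁ : y ≤ N) : (x + y) / N = x / N + 1 := by
    rw [Int.ediv_eq_iff_of_pos hN']
    constructor <;> nlinarith
  -- only the step from `t₀` to `t₀ + 1` crosses a multiple of `N`
  set t₀ := (N - 1 - x % N).toNat
  have ht₀ : (t₀ : ℤ) = N - 1 - x % N := Int.toNat_of_nonneg (by omega)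
  rw [sum_eq_single_of_mem t₀ (mem_range.mpr (by omega))]
  · rw [hlow t₀ (by omega) (by omega), hhigh (t₀ + 1) (by omega) (by omega),
      hhigh N (by omega) le_rfl]
  · intro t ht htt₀
    have ht' := mem_range.mp ht
    rcases lt_or_gt_of_ne htt₀ with h | h
    · rw [hlow t (by omega) (by omega), hlow (t + 1) (by omega) (by omega), sub_self, abs_zero]
    · rw [hhigh t (by omega) (by omega), hhigh (t + 1) (by omega) (by omega), sub_self,
        abs_zero]

end OneDimensional

section Poincare

variable {d : ℕ}

lemma sum_cubeFinset_succ {M : Type*} [AddCommMonoid M] (N : ℕ) (c : Base (d + 1))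
    (f : Base (d + 1) → M) :
    ∑ w ∈ cubeFinset N c, f w =
      ∑ t ∈ Ico (c 0) (c 0 + N), ∑ u ∈ cubeFinset N (Fin.tail c), f (Fin.cons t u) := by
  rw [← sum_product']
  refine sum_nbij' (fun w => (w 0, Fin.tail w)) (fun p => Fin.cons p.1 p.2) ?_ ?_ ?_ ?_ ?_ <;>
    simp [cubeFinset, Fin.forall_fin_succ, Fin.tail]

lemma cons_add_single_zero (t : ℤ) (u : Base d) :
    (Fin.cons t u : Base (d + 1)) + Pi.single 0 1 = Fin.cons (t + 1) u := by
  ext j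
  refine Fin.cases ?_ (fun k => ?_) j <;> simp

lemma cons_add_single_succ (t : ℤ) (u : Base d) (k : Fin d) :
    (Fin.cons t u : Base (d + 1)) + Pi.single k.succ 1 = Fin.cons t (u + Pi.single k 1) := by
  ext j
  refine Fin.cases ?_ (fun i => ?_) j
  · simp
  · by_cases hik : i = k <;> simp [hik]

lemma poincare_cubeFinset_succ (N : ℕ) (c : Base (d + 1)) (g : Base (d + 1) → ℤ)
    (ih : ∀ h : Base d → ℤ, ∑ u ∈ cubeFinset N (Fin.tail c),
        |(N : ℤ) ^ d * h u - ∑ w ∈ cubeFinset N (Fin.tail c), h w| ≤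
      (N : ℤ) ^ (d + 1) * ∑ k, ∑ w ∈ cubeFinset N (Fin.tail c), |h (w + Pi.single k 1) - h w|) :
    ∑ u ∈ cubeFinset N c, |(N : ℤ) ^ (d + 1) * g u - ∑ w ∈ cubeFinset N c, g w| ≤
      (N : ℤ) ^ (d + 2) * ∑ k, ∑ w ∈ cubeFinset N c, |g (w + Pi.single k 1) - g w| := by
  set I := Ico (c 0) (c 0 + N)
  set Q := cubeFinset N (Fin.tail c)
  set h : Base d → ℤ := fun u => ∑ t ∈ I, g (Fin.cons t u)
  set S := ∑ u ∈ Q, h u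
  have hI : (#I : ℤ) = N := by simp [I]
  have hS : ∑ w ∈ cubeFinset N c, g w = S := by rw [sum_cubeFinset_succ, sum_comm]
  have hsplit (t : ℤ) (u : Base d) : |(N : ℤ) ^ (d + 1) * g (Fin.cons t u) - S| ≤
      (N : ℤ) ^ d * |N * g (Fin.cons t u) - h u| + |(N : ℤ) ^ d * h u - S| := by
    calc _ = |(N : ℤ) ^ d * (N * g (Fin.cons t u) - h u) + ((N : ℤ) ^ d * h u - S)| := by
          ring_nf
      _ ≤ _ := by grw [abs_add_le, abs_mul, abs_of_nonneg (pow_nonneg (Nat.cast_nonneg N) d)]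
  rw [hS]
  simp only [sum_cubeFinset_succ N c, Fin.sum_univ_succ, cons_add_single_zero,
    cons_add_single_succ]
  calc ∑ t ∈ I, ∑ u ∈ Q, |(N : ℤ) ^ (d + 1) * g (Fin.cons t u) - S|
      ≤ ∑ t ∈ I, ∑ u ∈ Q, ((N : ℤ) ^ d * |N * g (Fin.cons t u) - h u|
          + |(N : ℤ) ^ d * h u - S|) :=
        sum_le_sum fun t _ => sum_le_sum fun u _ => hsplit t u
    _ = (N : ℤ) ^ d * ∑ u ∈ Q, ∑ t ∈ I, |N * g (Fin.cons t u) - h u|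
          + N * ∑ u ∈ Q, |(N : ℤ) ^ d * h u - S| := by
        rw [sum_comm, mul_sum, mul_sum, ← sum_add_distrib]
        refine sum_congr rfl fun u _ => ?_
        rw [sum_add_distrib, sum_const, nsmul_eq_mul, hI, ← mul_sum]
    _ ≤ (N : ℤ) ^ d * ∑ u ∈ Q, (N : ℤ) ^ 2 * ∑ t ∈ I,
            |g (Fin.cons (t + 1) u) - g (Fin.cons t u)|
          + N * ((N : ℤ) ^ (d + 1) * ∑ k, ∑ u ∈ Q, ∑ t ∈ I,
            |g (Fin.cons t (u + Pi.single k 1)) - g (Fin.cons t u)|) := by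
        gcongr with u
        · exact sum_abs_mul_sub_sum_Ico_le (fun t => g (Fin.cons t u)) (c 0) N
        · refine (ih h).trans ?_
          gcongr with k _ u
          rw [← sum_sub_distrib]
          exact abs_sum_le_sum_abs _ _
    _ = _ := by
        simp only [← mul_sum, sum_comm (s := Q) (t := I)]
        ring

theorem poincare_cubeFinset (N : ℕ) : ∀ {d : ℕ} (c : Base d) (g : Base d → ℤ),
    ∑ u ∈ cubeFinset N c, |(N : ℤ) ^ d * g u - ∑ w ∈ cubeFinset N c, g w| ≤
      (N : ℤ) ^ (d + 1) * ∑ k, ∑ w ∈ cubeFinset N c, |g (w + Pi.single k 1) - g w|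
  | 0, c, g => by
    have hconst : ∀ u ∈ cubeFinset N c, ∑ w ∈ cubeFinset N c, g w = g u := fun u hu =>
      sum_eq_single_of_mem u hu fun w _ hw => absurd (Subsingleton.elim w u) hw
    refine (sum_eq_zero fun u hu => ?_).le.trans (by simp)
    rw [hconst u hu, pow_zero, one_mul, sub_self, abs_zero]
  | _ + 1, c, g => poincare_cubeFinset_succ N c g (poincare_cubeFinset N (Fin.tail c))

end Poincare

section Cubes

variable {d N : ℕ}

lemma mem_cubeFinset {c u : Base d} : u ∈ cubeFinset N c ↔ ∀ i, c i ≤ u i ∧ u i < c i + N := by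
  simp [cubeFinset]

lemma mem_cubeFinset_cubePt (hN : 0 < N) {u w : Base d} :
    u ∈ cubeFinset N (cubePt N w) ↔ cubePt N u = cubePt N w := by
  have hN' : (0 : ℤ) < N := by exact_mod_cast hN
  simp only [mem_cubeFinset, cubePt, funext_iff, Int.fdiv_eq_ediv_of_nonneg _ hN'.le,
    mul_right_inj' hN'.ne']
  refine forall_congr' fun i => ?_
  rw [Int.ediv_eq_iff_of_pos hN', mul_comm (w i / N)]

lemma mem_cubeFinset_cubePt_self (hN : 0 < N) (u : Base d) : u ∈ cubeFinset N (cubePt N u) :=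
  (mem_cubeFinset_cubePt hN).mpr rfl

lemma pairwiseDisjoint_cubeFinset (hN : 0 < N) :
    (Set.range (cubePt N)).PairwiseDisjoint (cubeFinset (d := d) N) := by
  rintro _ ⟨v, rfl⟩ _ ⟨w, rfl⟩ hvw
  refine disjoint_left.mpr fun u hv hw => hvw ?_
  rw [mem_cubeFinset_cubePt hN] at hv hw
  rw [← hv, hw]

lemma finite_preimage_cubePt (hN : 0 < N) {V : Set (Base d)} (hV : V.Finite) :
    (cubePt N ⁻¹' V).Finite :=
  (hV.biUnion fun v _ => (cubeFinset N v).finite_toSet).subset fun u hu =>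
    Set.mem_biUnion hu (mem_cubeFinset_cubePt_self hN u)

lemma cubePt_add_single (z : Base d) (i : Fin d) (t : ℤ) :
    cubePt N (z + Pi.single i t) = update (cubePt N z) i (N * Int.fdiv (z i + t) N) := by
  ext j
  by_cases hj : j = i
  · subst hj; simp [cubePt]
  · simp [cubePt, hj]

lemma sum_range_abs_sub_comp_cubePt_le (hN : 0 < N) (φ : Base d → ℤ) (z : Base d) (i : Fin d) :
    ∑ t ∈ range N, |φ (cubePt N (z + t • Pi.single i 1 + Pi.single i 1)) -
        φ (cubePt N (z + t • Pi.single i 1))| ≤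
      |φ (cubePt N (z + N • Pi.single i 1)) - φ (cubePt N z)| := by
  have hN' : (0 : ℤ) ≤ N := Nat.cast_nonneg N
  have hsingle (n : ℕ) : n • (Pi.single i 1 : Base d) = Pi.single i (n : ℤ) := by
    rw [← Pi.single_smul, nsmul_one]
  have hself : update (cubePt N z) i (N * Int.fdiv (z i) N) = cubePt N z := update_eq_self i _
  have key := sum_range_abs_sub_comp_ediv_le hN (fun y => φ (update (cubePt N z) i (N * y))) (z i)
  simp only [← Int.fdiv_eq_ediv_of_nonneg _ hN', ← cubePt_add_single] at key
  simpa [hsingle, add_assoc, ← Pi.single_add, hself] using key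

lemma mul_variationAlong_le_of_comp_cubePt (hN : 0 < N) {g φ : Base d → ℤ}
    (hgφ : g = φ ∘ cubePt N) (hg : g.HasFiniteSupport) (i : Fin d) :
    N * variationAlong g (Pi.single i 1) ≤ variationAlong g (N • Pi.single i 1) := by
  subst hgφ
  rw [← finsum_sum_range_abs_sub hg]
  exact finsum_le_finsum' (hasFiniteSupport_sum_range_abs_sub hg _ N)
    (hasFiniteSupport_abs_sub_comp_add hg _) fun z => sum_range_abs_sub_comp_cubePt_le hN φ z i

noncomputable def cubeSum (N : ℕ) (τ : Base d → ℤ) (u : Base d) : ℤ :=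
  ∑ w ∈ cubeFinset N (cubePt N u), τ w

lemma hasFiniteSupport_cubeSum (hN : 0 < N) {τ : Base d → ℤ} (hτ : τ.HasFiniteSupport) :
    (cubeSum N τ).HasFiniteSupport := by
  refine (finite_preimage_cubePt hN (hτ.image (cubePt N))).subset fun u hu => ?_
  obtain ⟨w, hw, hτw⟩ := exists_ne_zero_of_sum_ne_zero hu
  exact ⟨w, hτw, (mem_cubeFinset_cubePt hN).mp hw⟩

lemma support_abs_pow_mul_sub_cubeSum_subset (hN : 0 < N) {τ : Base d → ℤ}
    (hτ : τ.HasFiniteSupport) :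
    support (fun z => |(N : ℤ) ^ d * τ z - cubeSum N τ z|) ⊆
      ↑((hτ.toFinset.image (cubePt N)).biUnion (cubeFinset N)) := by
  intro z hz
  obtain ⟨w, hτw, hwz⟩ : ∃ w, τ w ≠ 0 ∧ cubePt N w = cubePt N z := by
    by_cases hτz : τ z = 0
    · have : cubeSum N τ z ≠ 0 := fun h => hz (by simp [hτz, h])
      obtain ⟨w, hw, hτw⟩ := exists_ne_zero_of_sum_ne_zero this
      exact ⟨w, hτw, (mem_cubeFinset_cubePt hN).mp hw⟩
    · exact ⟨z, hτz, rfl⟩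
  exact mem_biUnion.mpr ⟨cubePt N w, mem_image_of_mem _ (hτ.mem_toFinset.mpr hτw),
    (mem_cubeFinset_cubePt hN).mpr hwz.symm⟩

lemma finsum_abs_pow_mul_sub_cubeSum_le (hN : 0 < N) {τ : Base d → ℤ}
    (hτ : τ.HasFiniteSupport) :
    ∑ᶠ z, |(N : ℤ) ^ d * τ z - cubeSum N τ z| ≤ (N : ℤ) ^ (d + 1) * TV τ := by
  set V := hτ.toFinset.image (cubePt N)
  set U := V.biUnion (cubeFinset N)
  have hdisj : (V : Set (Base d)).PairwiseDisjoint (cubeFinset N) :=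
    (pairwiseDisjoint_cubeFinset hN).subset (by simp [V])
  have hcube : ∀ v ∈ V, ∑ z ∈ cubeFinset N v, |(N : ℤ) ^ d * τ z - cubeSum N τ z| ≤
      (N : ℤ) ^ (d + 1) * ∑ k, ∑ w ∈ cubeFinset N v, |τ (w + Pi.single k 1) - τ w| := by
    intro v hv
    obtain ⟨w, -, rfl⟩ := mem_image.mp hv
    refine le_of_eq_of_le (sum_congr rfl fun z hz => ?_) (poincare_cubeFinset N _ τ)
    rw [cubeSum, (mem_cubeFinset_cubePt hN).mp hz]
  calc ∑ᶠ z, |(N : ℤ) ^ d * τ z - cubeSum N τ z|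
      = ∑ v ∈ V, ∑ z ∈ cubeFinset N v, |(N : ℤ) ^ d * τ z - cubeSum N τ z| := by
        rw [finsum_eq_sum_of_support_subset _ (support_abs_pow_mul_sub_cubeSum_subset hN hτ),
          sum_biUnion hdisj]
    _ ≤ ∑ v ∈ V, (N : ℤ) ^ (d + 1) *
          ∑ k, ∑ w ∈ cubeFinset N v, |τ (w + Pi.single k 1) - τ w| := sum_le_sum hcube
    _ = (N : ℤ) ^ (d + 1) * ∑ k, ∑ w ∈ U, |τ (w + Pi.single k 1) - τ w| := by
        rw [← mul_sum, sum_comm]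
        exact congrArg _ (sum_congr rfl fun k _ => (sum_biUnion hdisj).symm)
    _ ≤ (N : ℤ) ^ (d + 1) * TV τ := by
        rw [TV_eq_sum_variationAlong hτ]
        gcongr with k
        exact sum_le_finsum U (fun _ => abs_nonneg _) (hasFiniteSupport_abs_sub_comp_add hτ _)

end Cubes

section Coarse

variable {d N : ℕ}

lemma coarse_eq (τ : Base d → ℤ) (u : Base d) :
    coarse N τ u = nearestInt (cubeSum N τ u / (N : ℝ) ^ d) := by
  simp [coarse, roughAvg, cubeSum]

lemma coarse_eq_comp_cubePt (τ : Base d → ℤ) :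
    coarse N τ = (fun v => nearestInt ((∑ w ∈ cubeFinset N v, (τ w : ℝ)) / (N : ℝ) ^ d)) ∘
      cubePt N :=
  rfl

lemma isShift_coarse (hN : 0 < N) {τ : Base d → ℤ} (hτ : IsShift τ) : IsShift (coarse N τ) := by
  have : coarse N τ = (fun s : ℤ => nearestInt (s / (N : ℝ) ^ d)) ∘ cubeSum N τ :=
    funext (coarse_eq τ)
  rw [IsShift, this]
  exact (hasFiniteSupport_cubeSum hN hτ).comp (by simp [nearestInt_zero])

lemma pow_mul_abs_sub_coarse_le (hN : 0 < N) (τ : Base d → ℤ) (z : Base d) :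
    (N : ℤ) ^ d * |τ z - coarse N τ z| ≤ 2 * |(N : ℤ) ^ d * τ z - cubeSum N τ z| := by
  have hpos : (0 : ℝ) < (N : ℝ) ^ d := by positivity
  have hround := abs_sub_nearestInt_le (τ z) (cubeSum N τ z / (N : ℝ) ^ d)
  rw [← coarse_eq] at hround
  have hscale : (N : ℝ) ^ d * |(τ z : ℝ) - cubeSum N τ z / (N : ℝ) ^ d| =
      |(N : ℝ) ^ d * τ z - cubeSum N τ z| := by
    rw [← abs_of_pos hpos, ← abs_mul, abs_of_pos hpos, mul_sub, mul_div_cancel₀ _ hpos.ne']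
  have : (N : ℝ) ^ d * |(τ z : ℝ) - coarse N τ z| ≤ 2 * |(N : ℝ) ^ d * τ z - cubeSum N τ z| := by
    rw [← hscale, mul_left_comm]
    exact mul_le_mul_of_nonneg_left hround hpos.le
  exact_mod_cast this

lemma pow_mul_abs_coarse_sub_le (hN : 0 < N) (τ : Base d → ℤ) (y z : Base d) :
    (N : ℤ) ^ d * |coarse N τ y - coarse N τ z| ≤
      2 * |(N : ℤ) ^ d * τ y - cubeSum N τ y| + (N : ℤ) ^ d * |τ y - τ z| +
        2 * |(N : ℤ) ^ d * τ z - cubeSum N τ z| := by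
  have h₁ := abs_sub_le (coarse N τ y) (τ y) (coarse N τ z)
  have h₂ := abs_sub_le (τ y) (τ z) (coarse N τ z)
  rw [abs_sub_comm (coarse N τ y) (τ y)] at h₁
  calc (N : ℤ) ^ d * |coarse N τ y - coarse N τ z|
      ≤ (N : ℤ) ^ d * (|τ y - coarse N τ y| + |τ y - τ z| + |τ z - coarse N τ z|) := by
        gcongr
        linarith
    _ ≤ _ := by
        linarith [pow_mul_abs_sub_coarse_le hN τ y, pow_mul_abs_sub_coarse_le hN τ z]

lemma pow_mul_variationAlong_coarse_le (hN : 0 < N) {τ : Base d → ℤ} (hτ : τ.HasFiniteSupport)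
    (a : Base d) :
    (N : ℤ) ^ d * variationAlong (coarse N τ) a ≤
      4 * ∑ᶠ z, |(N : ℤ) ^ d * τ z - cubeSum N τ z| + (N : ℤ) ^ d * variationAlong τ a := by
  set F := fun z => |(N : ℤ) ^ d * τ z - cubeSum N τ z|
  have hF : F.HasFiniteSupport :=
    ((hτ.comp (g := ((N : ℤ) ^ d * ·)) (mul_zero _)).sub (hasFiniteSupport_cubeSum hN hτ)).comp
      abs_zero
  have hA : (fun z => 2 * F (z + a)).HasFiniteSupport :=
    (hF.comp_of_injective (add_left_injective a)).comp (g := (2 * ·)) (mul_zero 2)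
  have hB : (fun z => (N : ℤ) ^ d * |τ (z + a) - τ z|).HasFiniteSupport :=
    (hasFiniteSupport_abs_sub_comp_add hτ a).comp (g := ((N : ℤ) ^ d * ·)) (mul_zero _)
  have hC : (fun z => 2 * F z).HasFiniteSupport := hF.comp (g := (2 * ·)) (mul_zero 2)
  have hAB : (fun z => 2 * F (z + a) + (N : ℤ) ^ d * |τ (z + a) - τ z|).HasFiniteSupport :=
    hA.add hB
  have htrans : ∑ᶠ z, F (z + a) = ∑ᶠ z, F z := finsum_comp_equiv (Equiv.addRight a)
  calc (N : ℤ) ^ d * variationAlong (coarse N τ) a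
      = ∑ᶠ z, (N : ℤ) ^ d * |coarse N τ (z + a) - coarse N τ z| := mul_finsum _ _
    _ ≤ ∑ᶠ z, (2 * F (z + a) + (N : ℤ) ^ d * |τ (z + a) - τ z| + 2 * F z) :=
        finsum_le_finsum' ((hasFiniteSupport_abs_sub_comp_add (isShift_coarse hN hτ) a).comp
          (g := ((N : ℤ) ^ d * ·)) (mul_zero _)) (hAB.add hC)
          fun z => pow_mul_abs_coarse_sub_le hN τ (z + a) z
    _ = 2 * ∑ᶠ z, F (z + a) + (N : ℤ) ^ d * variationAlong τ a + 2 * ∑ᶠ z, F z := by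
        rw [finsum_add_distrib hAB hC, finsum_add_distrib hA hB, variationAlong,
          mul_finsum, mul_finsum, mul_finsum]
    _ = _ := by
        rw [htrans]
        ring

lemma TV_coarse_le (hN : 0 < N) {τ : Base d → ℤ} (hτ : IsShift τ) :
    TV (coarse N τ) ≤ (4 * d + 1) * TV τ := by
  have hdir (i : Fin d) : (N : ℤ) ^ (d + 1) * variationAlong (coarse N τ) (Pi.single i 1) ≤
      (N : ℤ) ^ (d + 1) * (4 * TV τ + variationAlong τ (Pi.single i 1)) :=
    calc (N : ℤ) ^ (d + 1) * variationAlong (coarse N τ) (Pi.single i 1)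
        = (N : ℤ) ^ d * (N * variationAlong (coarse N τ) (Pi.single i 1)) := by ring
      _ ≤ (N : ℤ) ^ d * variationAlong (coarse N τ) (N • Pi.single i 1) := by
          gcongr
          exact mul_variationAlong_le_of_comp_cubePt hN (coarse_eq_comp_cubePt τ)
            (isShift_coarse hN hτ) i
      _ ≤ 4 * ∑ᶠ z, |(N : ℤ) ^ d * τ z - cubeSum N τ z| +
            (N : ℤ) ^ d * variationAlong τ (N • Pi.single i 1) :=
          pow_mul_variationAlong_coarse_le hN hτ _
      _ ≤ 4 * ((N : ℤ) ^ (d + 1) * TV τ) +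
            (N : ℤ) ^ d * (N * variationAlong τ (Pi.single i 1)) := by
          gcongr
          · exact finsum_abs_pow_mul_sub_cubeSum_le hN hτ
          · exact variationAlong_nsmul_le hτ _ _
      _ = _ := by ring
  refine le_of_mul_le_mul_left ?_ (by positivity : (0 : ℤ) < (N : ℤ) ^ (d + 1))
  calc (N : ℤ) ^ (d + 1) * TV (coarse N τ)
      ≤ ∑ i, (N : ℤ) ^ (d + 1) * (4 * TV τ + variationAlong τ (Pi.single i 1)) := by
        rw [TV_eq_sum_variationAlong (isShift_coarse hN hτ), mul_sum]
        exact sum_le_sum fun i _ => hdir i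
    _ = (N : ℤ) ^ (d + 1) * ((4 * d + 1) * TV τ) := by
        rw [← mul_sum, sum_add_distrib, ← TV_eq_sum_variationAlong hτ, sum_const, card_univ,
          Fintype.card_fin, nsmul_eq_mul]
        ring

end Coarse

end DF

open DF

/-- For every shift `τ` and positive integer `N`,
`TV(τ_N) ≤ 10 d TV(τ)`. -/
theorem total_variation_of_coarse_graining
    (d : ℕ) (hd : 1 ≤ d) (τ : Base d → ℤ) (hτ : IsShift τ) (N : ℕ) (hN : 0 < N) :
    TV (coarse N τ) ≤ 10 * d * TV τ := by
  have hd' : (1 : ℤ) ≤ d := by exact_mod_cast hd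
  nlinarith [TV_coarse_le hN hτ, TV_nonneg τ]
end
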